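/- arXiv:1709.00358 — 9 statements merged into one kernel-verified Lean document; each statement's English description precedes it below -/
import Mathlib

section
/- Let n ≥ 2 and let p : Fin n → ℝ satisfy 1/2 ≤ p i ≤ 1 for all i and be sorted in decreasing order (i ≤ j → p i ≥ p j). Define U(λ) = (∑ i, λ i * p i) − max_i (λ i * p i) on the standard simplex Δ = {λ : Fin n → ℝ | λ i ≥ 0, ∑ i, λ i = 1}. Suppose λ* maximizes U over Δ and λ* i > 0 for some index i > 0 (i.e., i is not the most proficient worker) while λ* (i−1) = 0. Then there exists λ' maximizing U over Δ with λ' (i−1) > 0. -/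
open Finset Equiv

/-!
Swapping the probabilities of workers `i` and `j` (where `l j = 0` and `p i ≤ p j`) moves the mass
`l i` to the more proficient worker `j`. The expected reward grows by `δ = l i * (p j - p i) ≥ 0`,
while each attacked term `l k * p k` grows by at most `δ`: the new term at `j` is `l i * p i + δ`, and
the new term at `i` is `0`, which is bounded by the old maximum because `l j * p j = 0`.
So the swap of an optimal assignment is again optimal, and it charges `j` with `l i > 0`.
-/

section

variable {ι : Type*} [Fintype ι] [DecidableEq ι]

noncomputable def defenderUtility (p l : ι → ℝ) : ℝ := (∑ k, l k * p k) - ⨆ k, l k * p k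

theorem sum_comp_swap_mul (p l : ι → ℝ) (i j : ι) :
    ∑ k, l (swap i j k) * p k = ∑ k, l k * p k + (l i - l j) * (p j - p i) := by
  rcases eq_or_ne i j with rfl | hij
  · simp
  have hdiff : ∑ k, (l (swap i j k) * p k - l k * p k) = (l i - l j) * (p j - p i) := by
    rw [Fintype.sum_eq_add i j hij fun k hk => by rw [swap_apply_of_ne_of_ne hk.1 hk.2, sub_self]]
    simp only [swap_apply_left, swap_apply_right]
    ring
  rw [← hdiff, sum_sub_distrib]
  ring

theorem iSup_comp_swap_mul_le {p l : ι → ℝ} {i j : ι} (hl : ∀ k, 0 ≤ l k) (hj : l j = 0)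
    (hp : p i ≤ p j) :
    ⨆ k, l (swap i j k) * p k ≤ (⨆ k, l k * p k) + l i * (p j - p i) := by
  have : Nonempty ι := ⟨i⟩
  have hle (k : ι) : l k * p k ≤ ⨆ k, l k * p k := Finite.le_ciSup (fun k => l k * p k) k
  have hshift : 0 ≤ l i * (p j - p i) := mul_nonneg (hl i) (sub_nonneg.2 hp)
  refine ciSup_le fun k => ?_
  rcases eq_or_ne k i with rfl | hki
  · have := hle j
    simp only [swap_apply_left, hj, zero_mul] at this ⊢
    linarith
  rcases eq_or_ne k j with rfl | hkj
  · rw [swap_apply_right]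
    linarith [hle i]
  · rw [swap_apply_of_ne_of_ne hki hkj]
    linarith [hle k]

theorem defenderUtility_le_comp_swap {p l : ι → ℝ} {i j : ι} (hl : ∀ k, 0 ≤ l k)
    (hj : l j = 0) (hp : p i ≤ p j) :
    defenderUtility p l ≤ defenderUtility p (l ∘ swap i j) := by
  have hsum := sum_comp_swap_mul p l i j
  have hsup := iSup_comp_swap_mul_le hl hj hp
  rw [hj, sub_zero] at hsum
  simp only [defenderUtility, Function.comp_apply]
  linarith

end

theorem stmt_1_general (n : ℕ)
    (p : Fin n → ℝ)
    (hsort : ∀ i j : Fin n, i ≤ j → p j ≤ p i)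
    (U : (Fin n → ℝ) → ℝ)
    (hU : ∀ l : Fin n → ℝ, U l = (∑ i, l i * p i) - ⨆ i, l i * p i)
    (lstar : Fin n → ℝ) (hpos : ∀ i, 0 ≤ lstar i) (hsum : ∑ i, lstar i = 1)
    (hopt : ∀ l : Fin n → ℝ, (∀ i, 0 ≤ l i) → (∑ i, l i = 1) → U l ≤ U lstar)
    (i j : Fin n) (hij : (j : ℕ) + 1 = (i : ℕ))
    (hi : 0 < lstar i) (hj : lstar j = 0) :
    ∃ l' : Fin n → ℝ, (∀ k, 0 ≤ l' k) ∧ (∑ k, l' k = 1) ∧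
      (∀ l : Fin n → ℝ, (∀ k, 0 ≤ l k) → (∑ k, l k = 1) → U l ≤ U l') ∧
      0 < l' j := by
  have hU' : U = defenderUtility p := funext hU
  have hpij : p i ≤ p j := hsort j i (Fin.le_def.2 (by omega))
  refine ⟨lstar ∘ swap i j, fun k => hpos _, ?_, fun l hl hl1 => ?_, ?_⟩
  · rw [← hsum]
    exact Equiv.sum_comp (swap i j) lstar
  · rw [hU'] at hopt ⊢
    exact (hopt l hl hl1).trans (defenderUtility_le_comp_swap hpos hj hpij)
  · simpa using hi

/-- Proposition 3. If an optimal randomized unit assignment puts positive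
probability on worker `i > 0` while worker `i - 1` gets zero, then there is an optimal
randomized assignment putting positive probability on worker `i - 1`. -/
theorem stmt_1 (n : ℕ) (hn : 2 ≤ n)
    (p : Fin n → ℝ) (hp : ∀ i, 1 / 2 ≤ p i ∧ p i ≤ 1)
    (hsort : ∀ i j : Fin n, i ≤ j → p j ≤ p i)
    (U : (Fin n → ℝ) → ℝ)
    (hU : ∀ l : Fin n → ℝ, U l = (∑ i, l i * p i) - ⨆ i, l i * p i)
    (lstar : Fin n → ℝ) (hpos : ∀ i, 0 ≤ lstar i) (hsum : ∑ i, lstar i = 1)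
    (hopt : ∀ l : Fin n → ℝ, (∀ i, 0 ≤ l i) → (∑ i, l i = 1) → U l ≤ U lstar)
    (i j : Fin n) (hij : (j : ℕ) + 1 = (i : ℕ))
    (hi : 0 < lstar i) (hj : lstar j = 0) :
    ∃ l' : Fin n → ℝ, (∀ k, 0 ≤ l' k) ∧ (∑ k, l' k = 1) ∧
      (∀ l : Fin n → ℝ, (∀ k, 0 ≤ l k) → (∑ k, l k = 1) → U l ≤ U l') ∧
      0 < l' j :=
  stmt_1_general n p hsort U hU lstar hpos hsum hopt i j hij hi hj
end

section
/- Let n ≥ 2 and let p : Fin n → ℝ satisfy 1/2 ≤ p i ≤ 1 for all i and be sorted in decreasing order (i ≤ j → p i ≥ p j). Define U(λ) = (∑ i, λ i * p i) − max_i (λ i * p i) on the standard simplex Δ. Then there exists a maximizer λ* of U over Δ whose support is an initial segment of the workers: there is k with 1 ≤ k ≤ n such that λ* i > 0 for all i < k and λ* i = 0 for all i ≥ k. -/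
/-!
A maximizer of `U` exists by compactness of the simplex. If a better worker `i < j` gets no
weight while `j` does, swapping their weights raises the linear part of `U` by
`λ j (p i - p j)` and raises the maximum by at most as much, so `U` does not decrease.
Among the maximizers, one minimizing `∑ i, λ i * i` therefore has no such pair: its support is
a lower set of `Fin n`, i.e. an initial segment.
-/

open Finset

theorem Continuous.ciSup_of_fintype {X ι L : Type*} [TopologicalSpace X] [Fintype ι]
    [Nonempty ι] [ConditionallyCompleteLattice L] [TopologicalSpace L] [ContinuousSup L]
    {f : ι → X → L} (hf : ∀ i, Continuous (f i)) : Continuous fun x ↦ ⨆ i, f i x := by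
  simp_rw [← Finset.sup'_univ_eq_ciSup]
  exact Continuous.finset_sup'_apply univ_nonempty fun i _ ↦ hf i

theorem IsCompact.exists_isMaxOn_isMinOn_setOf_isMaxOn {X α β : Type*} [TopologicalSpace X]
    [LinearOrder α] [LinearOrder β] {K : Set X} (hK : IsCompact K) (hne : K.Nonempty)
    {f : X → α} {g : X → β} (hf : UpperSemicontinuousOn f K) (hg : LowerSemicontinuousOn g K) :
    ∃ x ∈ K, IsMaxOn f K x ∧ IsMinOn g {y ∈ K | IsMaxOn f K y} x := by
  obtain ⟨x₀, hx₀, hmax₀⟩ := hf.exists_isMaxOn hne hK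
  have hargmax : {y ∈ K | IsMaxOn f K y} = K ∩ f ⁻¹' Set.Ici (f x₀) := by
    ext y
    exact and_congr_right fun _ ↦ ⟨fun hy ↦ hy hx₀, fun hy z hz ↦ (hmax₀ hz).trans hy⟩
  have hcompact : IsCompact {y ∈ K | IsMaxOn f K y} :=
    hargmax ▸ hf.isCompact_inter_preimage_Ici hK (f x₀)
  have hne' : {y ∈ K | IsMaxOn f K y}.Nonempty := ⟨x₀, hx₀, hmax₀⟩
  obtain ⟨x, ⟨hxK, hxmax⟩, hxmin⟩ :=
    (hg.mono (Set.sep_subset K _)).exists_isMinOn hne' hcompact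
  exact ⟨x, hxK, hxmax, hxmin⟩

theorem Fin.exists_mem_iff_lt_of_isLowerSet {n : ℕ} {s : Set (Fin n)} (hs : IsLowerSet s) :
    ∃ k ≤ n, ∀ i : Fin n, i ∈ s ↔ (i : ℕ) < k := by
  rcases hs.eq_univ_or_Iio with rfl | ⟨a, rfl⟩
  · exact ⟨n, le_rfl, fun i ↦ by simp⟩
  · exact ⟨a, a.isLt.le, fun _ ↦ Iff.rfl⟩

section Swap

variable {ι : Type*} [Fintype ι] [DecidableEq ι] {i j : ι}

theorem sum_comp_swap_mul_of_eq_zero {R : Type*} [CommRing R] {l : ι → R} (w : ι → R)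
    (hi : l i = 0) :
    ∑ m, l (Equiv.swap i j m) * w m = ∑ m, l m * w m + l j * (w i - w j) := by
  rw [← Equiv.sum_comp (Equiv.swap i j)]
  simp only [Equiv.swap_apply_self]
  have hdiff : ∑ m, l m * (w (Equiv.swap i j m) - w m) = l j * (w i - w j) := by
    rw [Fintype.sum_eq_single j fun m hmj ↦ ?_, Equiv.swap_apply_right]
    rcases eq_or_ne m i with rfl | hmi
    · rw [hi, zero_mul]
    · rw [Equiv.swap_apply_of_ne_of_ne hmi hmj, sub_self, mul_zero]
  rw [← hdiff, ← Finset.sum_add_distrib]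
  exact Finset.sum_congr rfl fun m _ ↦ by ring

theorem ciSup_comp_swap_mul_le {l p : ι → ℝ} (hp : ∀ m, 0 ≤ p m) (hi : l i = 0) (hj : 0 ≤ l j)
    (hpij : p j ≤ p i) :
    ⨆ m, l (Equiv.swap i j m) * p m ≤ (⨆ m, l m * p m) + l j * (p i - p j) := by
  have hbdd : BddAbove (Set.range fun m ↦ l m * p m) := (Set.finite_range _).bddAbove
  have hle : ∀ m, l m * p m ≤ ⨆ m, l m * p m := le_ciSup hbdd
  have hgain : 0 ≤ l j * (p i - p j) := mul_nonneg hj (sub_nonneg.2 hpij)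
  have : Nonempty ι := ⟨i⟩
  refine ciSup_le fun m ↦ ?_
  rcases eq_or_ne m i with rfl | hmi
  · rw [Equiv.swap_apply_left]
    linarith [hle j]
  rcases eq_or_ne m j with rfl | hmj
  · rw [Equiv.swap_apply_right, hi, zero_mul]
    linarith [hle m, mul_nonneg hj (hp m)]
  · rw [Equiv.swap_apply_of_ne_of_ne hmi hmj]
    linarith [hle m]

end Swap

section Assignment

variable {n : ℕ} (p : Fin n → ℝ)

noncomputable def attackUtility (l : Fin n → ℝ) : ℝ :=
  (∑ i, l i * p i) - ⨆ i, l i * p i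

theorem continuous_attackUtility [NeZero n] : Continuous (attackUtility p) := by
  unfold attackUtility
  exact Continuous.sub (by fun_prop) (Continuous.ciSup_of_fintype fun i ↦ by fun_prop)

variable {p}

theorem attackUtility_le_comp_swap (hp : ∀ m, 0 ≤ p m) {l : Fin n → ℝ} {i j : Fin n}
    (hi : l i = 0) (hj : 0 ≤ l j) (hpij : p j ≤ p i) :
    attackUtility p l ≤ attackUtility p (l ∘ Equiv.swap i j) := by
  unfold attackUtility
  simp only [Function.comp_apply, sum_comp_swap_mul_of_eq_zero p hi]
  linarith [ciSup_comp_swap_mul_le hp hi hj hpij]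

theorem isLowerSet_setOf_pos_of_isMinOn (hp : ∀ m, 0 ≤ p m) (hanti : Antitone p)
    {l : Fin n → ℝ} (hl : l ∈ stdSimplex ℝ (Fin n))
    (hmax : IsMaxOn (attackUtility p) (stdSimplex ℝ (Fin n)) l)
    (hmin : IsMinOn (fun l : Fin n → ℝ ↦ ∑ m, l m * (m : ℕ))
      {l' ∈ stdSimplex ℝ (Fin n) | IsMaxOn (attackUtility p) (stdSimplex ℝ (Fin n)) l'} l) :
    IsLowerSet {i | 0 < l i} := by
  intro j i hij hj
  by_contra hi
  have hi0 : l i = 0 := le_antisymm (not_lt.1 hi) (hl.1 i)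
  have hlt : i < j := lt_of_le_of_ne hij fun h ↦ hi (h ▸ hj)
  have hswap_mem : l ∘ Equiv.swap i j ∈ stdSimplex ℝ (Fin n) :=
    ⟨fun m ↦ hl.1 _, (Equiv.sum_comp (Equiv.swap i j) l).trans hl.2⟩
  have hswap_max : IsMaxOn (attackUtility p) (stdSimplex ℝ (Fin n)) (l ∘ Equiv.swap i j) :=
    fun l' hl' ↦ (hmax hl').trans (attackUtility_le_comp_swap hp hi0 hj.le (hanti hij))
  have hmoment : ∑ m, l m * (m : ℕ) ≤ ∑ m, l (Equiv.swap i j m) * (m : ℕ) :=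
    hmin ⟨hswap_mem, hswap_max⟩
  rw [sum_comp_swap_mul_of_eq_zero _ hi0] at hmoment
  have : (0 : ℝ) < l j * ((j : ℕ) - (i : ℕ)) :=
    mul_pos hj (sub_pos.2 (by exact_mod_cast hlt))
  linarith

end Assignment

/-- There is an optimal randomized unit assignment whose support is an
initial segment of the workers (the `k` most proficient workers, for some `1 ≤ k ≤ n`). -/
theorem stmt_2 (n : ℕ) (hn : 2 ≤ n)
    (p : Fin n → ℝ) (hp : ∀ i, 1 / 2 ≤ p i ∧ p i ≤ 1)
    (hsort : ∀ i j : Fin n, i ≤ j → p j ≤ p i) :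
    ∃ lstar : Fin n → ℝ, (∀ i, 0 ≤ lstar i) ∧ (∑ i, lstar i = 1) ∧
      (∀ l : Fin n → ℝ, (∀ i, 0 ≤ l i) → (∑ i, l i = 1) →
        ((∑ i, l i * p i) - ⨆ i, l i * p i)
          ≤ ((∑ i, lstar i * p i) - ⨆ i, lstar i * p i)) ∧
      ∃ k : ℕ, 1 ≤ k ∧ k ≤ n ∧
        (∀ i : Fin n, (i : ℕ) < k → 0 < lstar i) ∧
        (∀ i : Fin n, k ≤ (i : ℕ) → lstar i = 0) := by
  have : NeZero n := ⟨by omega⟩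
  have hp0 : ∀ i, 0 ≤ p i := fun i ↦ by linarith [(hp i).1]
  have hmoment : Continuous fun l : Fin n → ℝ ↦ ∑ m, l m * (m : ℕ) := by fun_prop
  obtain ⟨lstar, hmem, hmax, hmin⟩ :=
    (isCompact_stdSimplex ℝ (Fin n)).exists_isMaxOn_isMinOn_setOf_isMaxOn
      ⟨_, single_mem_stdSimplex ℝ 0⟩
      (continuous_attackUtility p).continuousOn.upperSemicontinuousOn
      hmoment.continuousOn.lowerSemicontinuousOn
  obtain ⟨k, hkn, hk⟩ := Fin.exists_mem_iff_lt_of_isLowerSet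
    (isLowerSet_setOf_pos_of_isMinOn hp0 hsort hmem hmax hmin)
  obtain ⟨i₀, -, hi₀⟩ : ∃ i ∈ univ, 0 < lstar i :=
    Finset.exists_lt_of_sum_lt (f := fun _ ↦ (0 : ℝ)) (by simp [hmem.2])
  refine ⟨lstar, hmem.1, hmem.2, fun l hl0 hl1 ↦ hmax ⟨hl0, hl1⟩, k, ?_, hkn,
    fun i hi ↦ (hk i).2 hi, fun i hi ↦ ?_⟩
  · have := (hk i₀).1 hi₀
    omega
  · exact le_antisymm (not_lt.1 fun h ↦ absurd ((hk i).1 h) (by omega)) (hmem.1 i)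
end

section
/- Let n ≥ 2 and let p : Fin n → ℝ satisfy 1/2 ≤ p i ≤ 1 for all i and be sorted in decreasing order (i ≤ j → p i ≥ p j). Define U(λ) = (∑ i, λ i * p i) − max_i (λ i * p i) on the standard simplex Δ. Then there exists a maximizer λ* of U over Δ that is balanced on its support: for all i, j with λ* i > 0 and λ* j > 0, one has λ* i * p i = λ* j * p j. -/
/-!
Writing `w i = λ i * p i`, the constraint is `∑ w i / p i = 1` and the utility is `∑ w i - max w`.
Let `V` be the largest value `(#T - 1) / ∑_{i ∈ T} 1 / p i` over nonempty `T`; it is the utility of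
the assignment spreading `λ` over `T` so that `w` is constant on `T`. Conversely, for every `λ`,
with `M = max w` and `T = {i | V < p i}`,
`∑ w i - V = ∑ λ i (p i - V) ≤ ∑_{i ∈ T} M (1 - V / p i) = M (#T - V ∑_{i ∈ T} 1 / p i) ≤ M`,
since `w i ≤ M` and `#T - 1 ≤ V ∑_{i ∈ T} 1 / p i` by the choice of `V`.
-/

section

open Finset

variable {ι : Type*} {p l : ι → ℝ} {T : Finset ι}

noncomputable def utility [Fintype ι] (p l : ι → ℝ) : ℝ :=
  ∑ i, l i * p i - ⨆ i, l i * p i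

noncomputable def balancedOn [DecidableEq ι] (p : ι → ℝ) (T : Finset ι) (i : ι) : ℝ :=
  if i ∈ T then (p i)⁻¹ / ∑ j ∈ T, (p j)⁻¹ else 0

lemma balancedOn_nonneg [DecidableEq ι] (hp : ∀ i, 0 ≤ p i) (i : ι) : 0 ≤ balancedOn p T i := by
  unfold balancedOn
  split_ifs
  · exact div_nonneg (inv_nonneg.2 (hp i)) (sum_nonneg fun j _ => inv_nonneg.2 (hp j))
  · exact le_rfl

lemma sum_inv_pos (hp : ∀ i, 0 < p i) (hT : T.Nonempty) : 0 < ∑ j ∈ T, (p j)⁻¹ :=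
  sum_pos (fun j _ => inv_pos.2 (hp j)) hT

lemma sum_balancedOn [Fintype ι] [DecidableEq ι] (hp : ∀ i, 0 < p i) (hT : T.Nonempty) :
    ∑ i, balancedOn p T i = 1 := by
  simp only [balancedOn, ← sum_filter, filter_mem_eq_inter, univ_inter, ← sum_div]
  exact div_self (sum_inv_pos hp hT).ne'

lemma balancedOn_mul_self [DecidableEq ι] (hp : ∀ i, p i ≠ 0) (i : ι) :
    balancedOn p T i * p i = if i ∈ T then (∑ j ∈ T, (p j)⁻¹)⁻¹ else 0 := by
  unfold balancedOn
  split_ifs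
  · field_simp [hp i]
  · exact zero_mul _

lemma mem_of_balancedOn_pos [DecidableEq ι] {i : ι} (h : 0 < balancedOn p T i) : i ∈ T := by
  by_contra hi
  simp [balancedOn, hi] at h

lemma utility_balancedOn [Fintype ι] [DecidableEq ι] (hp : ∀ i, 0 < p i) (hT : T.Nonempty) :
    utility p (balancedOn p T) = (#T - 1) / ∑ j ∈ T, (p j)⁻¹ := by
  have hp' : ∀ i, p i ≠ 0 := fun i => (hp i).ne'
  obtain ⟨i₀, hi₀⟩ := hT
  have : Nonempty ι := ⟨i₀⟩
  have hsup : ⨆ i, balancedOn p T i * p i = (∑ j ∈ T, (p j)⁻¹)⁻¹ := by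
    refine le_antisymm (ciSup_le fun i => ?_) ?_
    · rw [balancedOn_mul_self hp']
      split_ifs
      exacts [le_rfl, inv_nonneg.2 (sum_nonneg fun j _ => (inv_pos.2 (hp j)).le)]
    · simpa [balancedOn_mul_self hp', hi₀] using
        le_ciSup (Finite.bddAbove_range fun i => balancedOn p T i * p i) i₀
  rw [utility, hsup]
  simp only [balancedOn_mul_self hp', ← sum_filter, filter_mem_eq_inter, univ_inter, sum_const,
    nsmul_eq_mul]
  ring

lemma sum_mul_sub_le_of_card_sub_one_le [Fintype ι] {V M : ℝ} (hp : ∀ i, 0 < p i)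
    (hV : ∀ T : Finset ι, (#T : ℝ) - 1 ≤ V * ∑ i ∈ T, (p i)⁻¹)
    (hl : ∀ i, 0 ≤ l i) (hl1 : ∑ i, l i = 1) (hM : ∀ i, l i * p i ≤ M) :
    ∑ i, l i * p i - M ≤ V := by
  obtain ⟨i₀, -, -⟩ := exists_ne_zero_of_sum_ne_zero (hl1.trans_ne one_ne_zero)
  have hM0 : 0 ≤ M := (mul_nonneg (hl i₀) (hp i₀).le).trans (hM i₀)
  have hterm : ∀ i, l i * (p i - V) ≤ M * (if V < p i then 1 - V * (p i)⁻¹ else 0) := by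
    intro i
    split_ifs with hi
    · have hlp : l i * (p i - V) = l i * p i * (1 - V * (p i)⁻¹) := by
        field_simp [(hp i).ne']
      rw [hlp]
      refine mul_le_mul_of_nonneg_right (hM i) ?_
      rw [sub_nonneg, ← div_eq_mul_inv, div_le_one (hp i)]
      exact hi.le
    · rw [mul_zero]
      exact mul_nonpos_of_nonneg_of_nonpos (hl i) (by linarith)
  set T := univ.filter fun i => V < p i
  have hV_le_M : ∑ i, l i * p i - V ≤ M := calc
    ∑ i, l i * p i - V = ∑ i, l i * (p i - V) := by
      simp only [mul_sub, sum_sub_distrib, ← sum_mul, hl1, one_mul]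
    _ ≤ ∑ i, M * (if V < p i then 1 - V * (p i)⁻¹ else 0) := sum_le_sum fun i _ => hterm i
    _ = M * (#T - V * ∑ i ∈ T, (p i)⁻¹) := by
      rw [← mul_sum, ← sum_filter, sum_sub_distrib, ← mul_sum, sum_const, nsmul_one]
    _ ≤ M := mul_le_of_le_one_right hM0 (by linarith [hV T])
  linarith

lemma utility_le_of_card_sub_one_le [Fintype ι] {V : ℝ} (hp : ∀ i, 0 < p i)
    (hV : ∀ T : Finset ι, (#T : ℝ) - 1 ≤ V * ∑ i ∈ T, (p i)⁻¹)
    (hl : ∀ i, 0 ≤ l i) (hl1 : ∑ i, l i = 1) : utility p l ≤ V :=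
  sum_mul_sub_le_of_card_sub_one_le hp hV hl hl1 fun i =>
    le_ciSup (Finite.bddAbove_range fun i => l i * p i) i

lemma exists_isMaxOn_utility_balancedOn [Fintype ι] [DecidableEq ι] [Nonempty ι]
    (hp : ∀ i, 0 < p i) :
    ∃ T : Finset ι, T.Nonempty ∧ ∀ l : ι → ℝ, (∀ i, 0 ≤ l i) → ∑ i, l i = 1 →
      utility p l ≤ utility p (balancedOn p T) := by
  obtain ⟨T, hT, hmax⟩ := exists_max_image (univ.filter Finset.Nonempty)
    (fun T => ((#T : ℝ) - 1) / ∑ j ∈ T, (p j)⁻¹) ⟨univ, by simp⟩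
  rw [mem_filter] at hT
  refine ⟨T, hT.2, fun l hl hl1 => ?_⟩
  rw [utility_balancedOn hp hT.2]
  refine utility_le_of_card_sub_one_le hp (fun S => ?_) hl hl1
  rcases S.eq_empty_or_nonempty with rfl | hS
  · simp
  · rw [← div_le_iff₀ (sum_inv_pos hp hS)]
    exact hmax S (by simp [hS])

end

theorem stmt_3_general (n : ℕ) (hn : 2 ≤ n)
    (p : Fin n → ℝ) (hp : ∀ i, 1 / 2 ≤ p i ∧ p i ≤ 1) :
    ∃ lstar : Fin n → ℝ, (∀ i, 0 ≤ lstar i) ∧ (∑ i, lstar i = 1) ∧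
      (∀ l : Fin n → ℝ, (∀ i, 0 ≤ l i) → (∑ i, l i = 1) →
        ((∑ i, l i * p i) - ⨆ i, l i * p i)
          ≤ ((∑ i, lstar i * p i) - ⨆ i, lstar i * p i)) ∧
      (∀ i j : Fin n, 0 < lstar i → 0 < lstar j →
        lstar i * p i = lstar j * p j) := by
  have hpos : ∀ i, 0 < p i := fun i => by linarith [(hp i).1]
  have : Nonempty (Fin n) := ⟨⟨0, by omega⟩⟩
  obtain ⟨T, hT, hmax⟩ := exists_isMaxOn_utility_balancedOn hpos
  refine ⟨balancedOn p T, balancedOn_nonneg (fun i => (hpos i).le), sum_balancedOn hpos hT,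
    hmax, fun i j hi hj => ?_⟩
  have hp' : ∀ i, p i ≠ 0 := fun i => (hpos i).ne'
  rw [balancedOn_mul_self hp', balancedOn_mul_self hp', if_pos (mem_of_balancedOn_pos hi),
    if_pos (mem_of_balancedOn_pos hj)]

/-- Proposition 4. There is an optimal randomized unit assignment that is
balanced on its support: `lstar i * p i = lstar j * p j` whenever both are in the support. -/
theorem stmt_3 (n : ℕ) (hn : 2 ≤ n)
    (p : Fin n → ℝ) (hp : ∀ i, 1 / 2 ≤ p i ∧ p i ≤ 1)
    (hsort : ∀ i j : Fin n, i ≤ j → p j ≤ p i) :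
    ∃ lstar : Fin n → ℝ, (∀ i, 0 ≤ lstar i) ∧ (∑ i, lstar i = 1) ∧
      (∀ l : Fin n → ℝ, (∀ i, 0 ≤ l i) → (∑ i, l i = 1) →
        ((∑ i, l i * p i) - ⨆ i, l i * p i)
          ≤ ((∑ i, lstar i * p i) - ⨆ i, lstar i * p i)) ∧
      (∀ i j : Fin n, 0 < lstar i → 0 < lstar j →
        lstar i * p i = lstar j * p j) :=
  stmt_3_general n hn p hp
end

section
/- Let p : Fin n → ℝ satisfy 1/2 ≤ p i ≤ 1 for all i, and fix k with 1 ≤ k ≤ n. Define λ by λ i = (1/p i) / (∑_{j < k} 1/p j) for i < k and λ i = 0 for i ≥ k. Then λ lies in the standard simplex, λ i * p i = 1 / (∑_{j < k} 1/p j) for all i < k, and U(λ) = (∑ i, λ i * p i) − max_i (λ i * p i) = (k − 1) / (∑_{j < k} 1/p j). -/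
/-!
Each supported worker `i` receives weight proportional to `1 / p i`, so the attacker's value
`lam i * p i` is the same constant `1 / V` on the whole support and `0` elsewhere. Hence the
expected value is `k / V`, the attacker removes exactly one share `1 / V`, and the defender keeps
`(k - 1) / V`.
-/

open Finset

theorem ciSup_ite_eq_of_le {ι α : Type*} [ConditionallyCompleteLinearOrder α] {P : ι → Prop}
    [DecidablePred P] {a b : α} (hP : ∃ i, P i) (hab : a ≤ b) :
    ⨆ i, (if P i then b else a) = b := by
  obtain ⟨i₀, hi₀⟩ := hP
  have : Nonempty ι := ⟨i₀⟩
  refine ciSup_eq_of_forall_le_of_forall_lt_exists_gt (fun i => ?_) fun c hc => ⟨i₀, ?_⟩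
  · split_ifs
    exacts [le_rfl, hab]
  · rwa [if_pos hi₀]

section BalancedAssignment

variable {ι : Type*} {P : ι → Prop} [DecidablePred P] {p lam : ι → ℝ} {V : ℝ}

theorem balanced_mul_eq (hp : ∀ i, P i → p i ≠ 0)
    (hlam : ∀ i, lam i = if P i then (1 / p i) / V else 0) (i : ι) :
    lam i * p i = if P i then 1 / V else 0 := by
  rw [hlam i]
  split_ifs with hi
  · field_simp [hp i hi]
  · exact zero_mul _

variable [Fintype ι]

theorem balanced_nonneg (hp : ∀ i, P i → 0 ≤ p i) (hV : V = ∑ j ∈ univ.filter P, 1 / p j)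
    (hlam : ∀ i, lam i = if P i then (1 / p i) / V else 0) (i : ι) : 0 ≤ lam i := by
  have hV_nonneg : 0 ≤ V := hV ▸ sum_nonneg fun j hj => by
    have := hp j (mem_filter.mp hj).2
    positivity
  rw [hlam i]
  split_ifs with hi
  · have := hp i hi
    positivity
  · exact le_rfl

theorem balanced_sum_eq_one (hP : ∃ i, P i) (hp : ∀ i, P i → 0 < p i)
    (hV : V = ∑ j ∈ univ.filter P, 1 / p j)
    (hlam : ∀ i, lam i = if P i then (1 / p i) / V else 0) : ∑ i, lam i = 1 := by
  obtain ⟨i₀, hi₀⟩ := hP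
  have hV_pos : 0 < V := hV ▸ sum_pos (fun j hj => one_div_pos.mpr (hp j (mem_filter.mp hj).2))
    ⟨i₀, mem_filter.mpr ⟨mem_univ _, hi₀⟩⟩
  calc ∑ i, lam i = ∑ j ∈ univ.filter P, (1 / p j) / V := by
        rw [sum_filter]
        exact sum_congr rfl fun i _ => hlam i
    _ = 1 := by rw [← sum_div, ← hV, div_self hV_pos.ne']

theorem balanced_utility (hP : ∃ i, P i) (hp : ∀ i, P i → 0 < p i)
    (hV : V = ∑ j ∈ univ.filter P, 1 / p j)
    (hlam : ∀ i, lam i = if P i then (1 / p i) / V else 0) :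
    (∑ i, lam i * p i) - ⨆ i, lam i * p i = ((#(univ.filter P) : ℕ) - 1) / V := by
  have hV_nonneg : 0 ≤ V :=
    hV ▸ sum_nonneg fun j hj => (one_div_pos.mpr (hp j (mem_filter.mp hj).2)).le
  simp only [balanced_mul_eq (fun i hi => (hp i hi).ne') hlam]
  rw [← sum_filter, sum_const, nsmul_eq_mul, ciSup_ite_eq_of_le hP (by positivity)]
  ring

end BalancedAssignment

/-- The balanced assignment on the top `k` workers,
`lam i = (1/p i) / (∑_{j<k} 1/p j)` for `i < k` and `0` otherwise, lies in the simplex,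
gives each supported worker the same attacker value `1/V`, and has defender utility
`(k - 1) / V` where `V = ∑_{j<k} 1/p j`. -/
theorem stmt_4 (n k : ℕ) (hk1 : 1 ≤ k) (hkn : k ≤ n)
    (p : Fin n → ℝ) (hp : ∀ i, 1 / 2 ≤ p i ∧ p i ≤ 1)
    (V : ℝ) (hV : V = ∑ j ∈ Finset.univ.filter (fun j : Fin n => (j : ℕ) < k), 1 / p j)
    (lam : Fin n → ℝ)
    (hlam : ∀ i : Fin n, lam i = if (i : ℕ) < k then (1 / p i) / V else 0) :
    (∀ i, 0 ≤ lam i) ∧ (∑ i, lam i = 1) ∧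
      (∀ i : Fin n, (i : ℕ) < k → lam i * p i = 1 / V) ∧
      ((∑ i, lam i * p i) - ⨆ i, lam i * p i) = ((k : ℝ) - 1) / V := by
  have hp_pos : ∀ i : Fin n, (i : ℕ) < k → 0 < p i := fun i _ => by linarith [(hp i).1]
  have hsupport : ∃ i : Fin n, (i : ℕ) < k := ⟨⟨0, by omega⟩, hk1⟩
  have hcard : #(univ.filter fun j : Fin n => (j : ℕ) < k) = k := by
    rw [Fin.card_filter_val_lt, min_eq_right hkn]
  refine ⟨balanced_nonneg (fun i hi => (hp_pos i hi).le) hV hlam,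
    balanced_sum_eq_one hsupport hp_pos hV hlam, fun i hi => ?_, ?_⟩
  · rw [balanced_mul_eq (fun i hi => (hp_pos i hi).ne') hlam, if_pos hi]
  · rw [balanced_utility hsupport hp_pos hV hlam, hcard]
end

section
/- Let n ≥ 2 and let p : Fin n → ℝ satisfy 1/2 ≤ p i ≤ 1 for all i and be sorted in decreasing order (i ≤ j → p i ≥ p j). Then the maximum over the standard simplex Δ of U(λ) = (∑ i, λ i * p i) − max_i (λ i * p i) equals the maximum over k ∈ {1, …, n} of (k − 1) / (∑_{j < k} 1/p j). In particular, the optimal randomized unit assignment places probability λ i = (1/p i) / (∑_{j < k*} 1/p j) on each of the k* most proficient workers, where k* attains this maximum. -/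
/-!
The balanced assignment on the top `k` workers equalises `λ i * p i = 1 / S k`, where
`S k = ∑_{j<k} 1 / p j`, so its utility is `(k - 1) / S k`. Conversely, let `v` be the largest of
these values and `c i = 1 - v / p i`, which is antitone. With `a i = λ i * p i ∈ [0, M]`,
`M = max a`, and `∑ λ i = 1`, the utility minus `v` equals `∑ a i * c i - M`, which is at most
`M * (∑_{c i ≥ 0} c i - 1)`. The indices with `c i ≥ 0` form a prefix `{j < k}`, on which
`∑ c j = k - v * S k ≤ 1` by the choice of `v`.
-/

open Finset

noncomputable section

namespace RandomizedAssignment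

variable {n : ℕ}

def invPrefixSum (p : Fin n → ℝ) (k : ℕ) : ℝ :=
  ∑ j ∈ univ.filter (fun j : Fin n => (j : ℕ) < k), 1 / p j

def utility (p l : Fin n → ℝ) : ℝ :=
  (∑ i, l i * p i) - ⨆ i, l i * p i

def balancedAssignment (p : Fin n → ℝ) (k : ℕ) : Fin n → ℝ :=
  fun i => if (i : ℕ) < k then (1 / p i) / invPrefixSum p k else 0

variable {k : ℕ}

lemma card_filter_val_lt_of_le (hk : k ≤ n) :
    #(univ.filter fun j : Fin n => (j : ℕ) < k) = k := by
  rw [Fin.card_filter_val_lt, min_eq_right hk]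

lemma sum_mul_le_mul_sum_filter_nonneg {ι : Type*} [Fintype ι] {a c : ι → ℝ} {M : ℝ}
    (ha : ∀ i, 0 ≤ a i) (haM : ∀ i, a i ≤ M) :
    ∑ i, a i * c i ≤ M * ∑ i ∈ univ.filter (fun i => 0 ≤ c i), c i := by
  rw [← sum_filter_add_sum_filter_not univ (fun i => 0 ≤ c i) (fun i => a i * c i), mul_sum]
  refine add_le_of_le_of_nonpos (sum_le_sum fun i hi => ?_) (sum_nonpos fun i hi => ?_)
  · exact mul_le_mul_of_nonneg_right (haM i) (mem_filter.1 hi).2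
  · exact mul_nonpos_of_nonneg_of_nonpos (ha i) (not_le.1 (mem_filter.1 hi).2).le

variable {p : Fin n → ℝ}

lemma invPrefixSum_pos (hp : ∀ i, 0 < p i) (hk : 1 ≤ k) (hkn : k ≤ n) :
    0 < invPrefixSum p k :=
  sum_pos (fun j _ => one_div_pos.2 (hp j)) ⟨⟨0, by omega⟩, by simp; omega⟩

lemma sum_filter_val_lt_one_sub_div (v : ℝ) (hkn : k ≤ n) :
    ∑ j ∈ univ.filter (fun j : Fin n => (j : ℕ) < k), (1 - v / p j) =
      k - v * invPrefixSum p k := by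
  simp only [sum_sub_distrib, sum_const, card_filter_val_lt_of_le hkn, nsmul_one, invPrefixSum,
    mul_sum, mul_one_div]

lemma balancedAssignment_nonneg (hp : ∀ i, 0 < p i) (hk : 1 ≤ k) (hkn : k ≤ n) (i : Fin n) :
    0 ≤ balancedAssignment p k i := by
  unfold balancedAssignment
  split_ifs
  · exact div_nonneg (one_div_pos.2 (hp i)).le (invPrefixSum_pos hp hk hkn).le
  · exact le_rfl

lemma sum_balancedAssignment (hp : ∀ i, 0 < p i) (hk : 1 ≤ k) (hkn : k ≤ n) :
    ∑ i, balancedAssignment p k i = 1 := by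
  simp only [balancedAssignment]
  rw [← sum_filter, ← sum_div]
  exact div_self (invPrefixSum_pos hp hk hkn).ne'

lemma utility_balancedAssignment (hp : ∀ i, 0 < p i) (hk : 1 ≤ k) (hkn : k ≤ n) :
    utility p (balancedAssignment p k) = ((k : ℝ) - 1) / invPrefixSum p k := by
  have : Nonempty (Fin n) := ⟨⟨0, by omega⟩⟩
  have hload : ∀ i, balancedAssignment p k i * p i =
      if (i : ℕ) < k then 1 / invPrefixSum p k else 0 := fun i => by
    unfold balancedAssignment
    split_ifs
    · field_simp [(hp i).ne']
    · simp
  have hsup : (⨆ i, balancedAssignment p k i * p i) = 1 / invPrefixSum p k := by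
    refine le_antisymm (ciSup_le fun i => ?_) ?_
    · rw [hload]
      split_ifs
      · exact le_rfl
      · exact (one_div_pos.2 (invPrefixSum_pos hp hk hkn)).le
    · refine le_ciSup_of_le (Set.finite_range _).bddAbove ⟨0, by omega⟩ ?_
      rw [hload, if_pos (show 0 < k by omega)]
  rw [utility, hsup]
  simp only [hload, ← sum_filter, sum_const, card_filter_val_lt_of_le hkn, nsmul_eq_mul,
    mul_one_div, div_sub_div_same]

lemma utility_le_of_forall_le (hp : ∀ i, 0 < p i) (hanti : Antitone p) {l : Fin n → ℝ}
    (hl0 : ∀ i, 0 ≤ l i) (hl1 : ∑ i, l i = 1) {v : ℝ}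
    (hv : ∀ k, 1 ≤ k → k ≤ n → ((k : ℝ) - 1) / invPrefixSum p k ≤ v) :
    utility p l ≤ v := by
  obtain ⟨i₀, -, -⟩ := exists_ne_zero_of_sum_ne_zero (hl1 ▸ one_ne_zero : ∑ i, l i ≠ 0)
  have hv0 : 0 ≤ v := by simpa using hv 1 le_rfl i₀.pos
  set c : Fin n → ℝ := fun i => 1 - v / p i
  have hc : Antitone c := fun i j hij =>
    sub_le_sub_left (div_le_div_of_nonneg_left hv0 (hp j) (hanti hij)) 1
  set k := #(univ.filter fun j => 0 ≤ c j)
  have hkn : k ≤ n := (card_le_univ _).trans_eq (Fintype.card_fin n)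
  have hprefix : univ.filter (fun j => 0 ≤ c j) = univ.filter (fun j : Fin n => (j : ℕ) < k) :=
    filter_congr fun j _ =>
      (Fin.lt_card_filter_univ_iff_apply_of_imp (j := j) (fun i => 0 ≤ c i)
        fun _ _ hji (hi : 0 ≤ c _) => hi.trans (hc hji)).symm
  have hck : ∑ j ∈ univ.filter (fun j => 0 ≤ c j), c j ≤ 1 := by
    rw [hprefix, sum_filter_val_lt_one_sub_div v hkn]
    rcases Nat.eq_zero_or_pos k with hk0 | hk1
    · simp [hk0, invPrefixSum]
    · have := (div_le_iff₀ (invPrefixSum_pos hp hk1 hkn)).1 (hv k hk1 hkn)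
      linarith
  set M := ⨆ i, l i * p i
  have hM : ∀ i, l i * p i ≤ M := le_ciSup (Set.finite_range _).bddAbove
  have hM0 : 0 ≤ M := (mul_nonneg (hl0 i₀) (hp i₀).le).trans (hM i₀)
  have hshift : utility p l - v = ∑ i, l i * p i * c i - M := by
    have : ∑ i, l i * p i * (v / p i) = v :=
      calc ∑ i, l i * p i * (v / p i) = ∑ i, l i * v :=
            sum_congr rfl fun i _ => by field_simp [(hp i).ne']
        _ = v := by rw [← sum_mul, hl1, one_mul]
    simp only [utility, c, mul_sub, mul_one, sum_sub_distrib]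
    linarith
  have hbound :=
    sum_mul_le_mul_sum_filter_nonneg (c := c) (fun i => mul_nonneg (hl0 i) (hp i).le) hM
  linarith [mul_le_mul_of_nonneg_left hck hM0]

end RandomizedAssignment

end

open RandomizedAssignment in
/-- Correctness of Algorithm 1. The maximum over the simplex of
`U(λ) = ∑ λ i p i − max_i λ i p i` equals the maximum over `k ∈ {1,…,n}` of
`(k−1) / ∑_{j<k} (1/p j)`, and is attained by the balanced assignment on the top `k*`
workers, `λ i = (1/p i)/(∑_{j<k*} 1/p j)`. -/
theorem stmt_5 (n : ℕ) (hn : 2 ≤ n)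
    (p : Fin n → ℝ) (hp : ∀ i, 1 / 2 ≤ p i ∧ p i ≤ 1)
    (hsort : ∀ i j : Fin n, i ≤ j → p j ≤ p i) :
    ∃ v : ℝ,
      IsGreatest {x : ℝ | ∃ l : Fin n → ℝ, (∀ i, 0 ≤ l i) ∧ (∑ i, l i = 1) ∧
        x = (∑ i, l i * p i) - ⨆ i, l i * p i} v ∧
      IsGreatest {y : ℝ | ∃ k : ℕ, 1 ≤ k ∧ k ≤ n ∧
        y = ((k : ℝ) - 1) /
          ∑ j ∈ Finset.univ.filter (fun j : Fin n => (j : ℕ) < k), 1 / p j} v ∧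
      ∃ k : ℕ, 1 ≤ k ∧ k ≤ n ∧
        v = ((k : ℝ) - 1) /
          ∑ j ∈ Finset.univ.filter (fun j : Fin n => (j : ℕ) < k), 1 / p j ∧
        (let V : ℝ := ∑ j ∈ Finset.univ.filter (fun j : Fin n => (j : ℕ) < k), 1 / p j
         let l : Fin n → ℝ := fun i => if (i : ℕ) < k then (1 / p i) / V else 0
         (∀ i, 0 ≤ l i) ∧ (∑ i, l i = 1) ∧
           ((∑ i, l i * p i) - ⨆ i, l i * p i) = v) := by
  have hp0 : ∀ i, 0 < p i := fun i => by linarith [(hp i).1]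
  obtain ⟨k, hk, hmax⟩ := (Finset.Icc 1 n).exists_max_image
    (fun k => ((k : ℝ) - 1) / invPrefixSum p k) ⟨1, Finset.mem_Icc.2 ⟨le_rfl, by omega⟩⟩
  obtain ⟨hk1, hkn⟩ := Finset.mem_Icc.1 hk
  have hmax' : ∀ k', 1 ≤ k' → k' ≤ n →
      ((k' : ℝ) - 1) / invPrefixSum p k' ≤ ((k : ℝ) - 1) / invPrefixSum p k :=
    fun k' h1 h2 => hmax k' (Finset.mem_Icc.2 ⟨h1, h2⟩)
  have hbal := utility_balancedAssignment hp0 hk1 hkn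
  refine ⟨_, ⟨⟨balancedAssignment p k, balancedAssignment_nonneg hp0 hk1 hkn,
      sum_balancedAssignment hp0 hk1 hkn, hbal.symm⟩, ?_⟩, ⟨⟨k, hk1, hkn, rfl⟩, ?_⟩,
    k, hk1, hkn, rfl, balancedAssignment_nonneg hp0 hk1 hkn, sum_balancedAssignment hp0 hk1 hkn,
    hbal⟩
  · rintro x ⟨l, hl0, hl1, rfl⟩
    exact utility_le_of_forall_le hp0 hsort hl0 hl1 hmax'
  · rintro y ⟨k', h1, h2, rfl⟩
    exact hmax' k' h1 h2
end

section
/- Let there be n workers with proficiencies p : Fin n → ℝ, 1/2 ≤ p i ≤ 1, and m tasks with nonnegative utilities u : Fin m → ℝ with total U_tot = ∑ t, u t > 0. Let q be a finitely supported probability distribution over single-worker-per-task assignments f : Fin m → Fin n, and let a be the attacked worker. Define λ w = (∑_f q f · ∑_{t : f t = w} u t) / U_tot. Then λ is a probability distribution on Fin n (λ w ≥ 0 and ∑ w, λ w = 1), and U_tot · ∑_{w ≠ a} p w · λ w = ∑_f q f · ∑_{t : f t ≠ a} u t · p (f t); that is, the distribution λ over unit assignments (assigning all tasks to worker w with probability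 λ w) yields the same defender utility against the attack on a as q does. -/
/-! Grouping the tasks of each assignment by the worker performing them turns the utility of `q`
into a sum over workers, each weighted by the expected utility it is assigned; that weight,
normalised by `U_tot`, is `λ w`, and summing it over all workers gives back `U_tot`. -/

open Finset

section Fibers

variable {α β R : Type*} [Fintype α] [Fintype β] [DecidableEq β] [CommSemiring R]

theorem sum_filter_mul_sum_fiber (f : α → β) (u : α → R) (g : β → R) (P : β → Prop)
    [DecidablePred P] :
    ∑ w ∈ univ.filter P, g w * ∑ t ∈ univ.filter (fun t => f t = w), u t
      = ∑ t ∈ univ.filter (fun t => P (f t)), u t * g (f t) := by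
  calc ∑ w ∈ univ.filter P, g w * ∑ t ∈ univ.filter (fun t => f t = w), u t
      = ∑ w ∈ univ.filter P, ∑ t ∈ univ.filter (fun t => f t = w), u t * g (f t) := by
        refine sum_congr rfl fun w _ => ?_
        rw [mul_sum]
        exact sum_congr rfl fun t ht => by rw [(mem_filter.1 ht).2, mul_comm]
    _ = ∑ t ∈ univ.filter (fun t => f t ∈ univ.filter P), u t * g (f t) :=
        sum_fiberwise_eq_sum_filter _ _ _ _
    _ = ∑ t ∈ univ.filter (fun t => P (f t)), u t * g (f t) := by
        simp only [mem_filter, mem_univ, true_and]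

theorem sum_filter_mul_sum_mixture_fiber (S : Finset (α → β)) (q : (α → β) → R)
    (u : α → R) (g : β → R) (P : β → Prop) [DecidablePred P] :
    ∑ w ∈ univ.filter P, g w * ∑ f ∈ S, q f * ∑ t ∈ univ.filter (fun t => f t = w), u t
      = ∑ f ∈ S, q f * ∑ t ∈ univ.filter (fun t => P (f t)), u t * g (f t) := by
  calc ∑ w ∈ univ.filter P, g w * ∑ f ∈ S, q f * ∑ t ∈ univ.filter (fun t => f t = w), u t
      = ∑ w ∈ univ.filter P, ∑ f ∈ S,
          q f * (g w * ∑ t ∈ univ.filter (fun t => f t = w), u t) := by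
        simp only [mul_sum S, mul_left_comm]
    _ = ∑ f ∈ S, q f * ∑ t ∈ univ.filter (fun t => P (f t)), u t * g (f t) := by
        rw [sum_comm]
        simp only [← mul_sum, sum_filter_mul_sum_fiber]

theorem sum_sum_mul_sum_fiber (S : Finset (α → β)) (q : (α → β) → R) (u : α → R) :
    ∑ w, ∑ f ∈ S, q f * ∑ t ∈ univ.filter (fun t => f t = w), u t
      = (∑ f ∈ S, q f) * ∑ t, u t := by
  rw [sum_comm, sum_mul]
  simp only [← mul_sum, sum_fiberwise]

end Fibers

theorem stmt_9_general (n m : ℕ)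
    (p : Fin n → ℝ)
    (u : Fin m → ℝ) (hu : ∀ t, 0 ≤ u t)
    (Utot : ℝ) (hUtot : Utot = ∑ t, u t) (hUpos : 0 < Utot)
    (q : (Fin m → Fin n) → ℝ) (hq0 : ∀ f, 0 ≤ q f) (hq1 : ∑ f, q f = 1)
    (a : Fin n)
    (lam : Fin n → ℝ)
    (hlam : ∀ w, lam w
      = (∑ f, q f * ∑ t ∈ Finset.univ.filter (fun t => f t = w), u t) / Utot) :
    (∀ w, 0 ≤ lam w) ∧ (∑ w, lam w = 1) ∧
      Utot * ∑ w ∈ Finset.univ.filter (fun w => w ≠ a), p w * lam w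
        = ∑ f, q f * ∑ t ∈ Finset.univ.filter (fun t => f t ≠ a), u t * p (f t) := by
  have hUlam : ∀ w, Utot * lam w = ∑ f, q f * ∑ t ∈ univ.filter (fun t => f t = w), u t :=
    fun w => by rw [hlam, mul_div_cancel₀ _ hUpos.ne']
  refine ⟨fun w => ?_, ?_, ?_⟩
  · rw [hlam]
    exact div_nonneg (sum_nonneg fun f _ => mul_nonneg (hq0 f) (sum_nonneg fun t _ => hu t))
      hUpos.le
  · apply mul_left_cancel₀ hUpos.ne'
    rw [mul_sum, mul_one]
    simp only [hUlam]
    rw [sum_sum_mul_sum_fiber, hq1, one_mul, hUtot]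
  · rw [mul_sum]
    simp only [mul_left_comm Utot, hUlam]
    exact sum_filter_mul_sum_mixture_fiber univ q u p (· ≠ a)

/-- Proposition 7 (representation, heterogeneous tasks, one worker per task).
Any distribution `q` over assignments `f : Fin m → Fin n` is utility-equivalent, against an
attack on worker `a`, to the distribution over unit assignments
`lam w = (∑_f q f · ∑_{t : f t = w} u t) / U_tot`. -/
theorem stmt_9 (n m : ℕ) (hn : 1 ≤ n)
    (p : Fin n → ℝ) (hp : ∀ i, 1 / 2 ≤ p i ∧ p i ≤ 1)
    (u : Fin m → ℝ) (hu : ∀ t, 0 ≤ u t)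
    (Utot : ℝ) (hUtot : Utot = ∑ t, u t) (hUpos : 0 < Utot)
    (q : (Fin m → Fin n) → ℝ) (hq0 : ∀ f, 0 ≤ q f) (hq1 : ∑ f, q f = 1)
    (a : Fin n)
    (lam : Fin n → ℝ)
    (hlam : ∀ w, lam w
      = (∑ f, q f * ∑ t ∈ Finset.univ.filter (fun t => f t = w), u t) / Utot) :
    (∀ w, 0 ≤ lam w) ∧ (∑ w, lam w = 1) ∧
      Utot * ∑ w ∈ Finset.univ.filter (fun w => w ≠ a), p w * lam w
        = ∑ f, q f * ∑ t ∈ Finset.univ.filter (fun t => f t ≠ a), u t * p (f t) :=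
  stmt_9_general n m p u hu Utot hUtot hUpos q hq0 hq1 a lam hlam
end

section
/- Let n ≥ 2 and let p : Fin n → ℝ satisfy 1/2 ≤ p i ≤ 1 for all i and be sorted in decreasing order (i ≤ j → p i ≥ p j). Let tasks have nonnegative utilities u : Fin m → ℝ with total U_tot = ∑ t, u t. Restricted to randomized strategies over single-worker-per-task assignments, the defender's optimal expected utility under a best-responding attacker equals U_tot · max_{1 ≤ k ≤ n} (k − 1) / (∑_{j < k} 1/p j); equivalently, the maximum over the standard simplex of U_tot · ((∑ i, λ i * p i) − max_i (λ i * p i)) equals this value. -/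
/-!
Write `S_k = ∑_{j<k} 1 / p_j` and `x_i = λ_i p_i`. If the attacker disables worker `a`, a mixed
assignment earns `∑_i w_i p_i - w_a p_a`, where `w_i` is the expected utility routed to worker
`i`; so only these loads matter, and mixing unit assignments realises every load vector, which
reduces the game to the problem on the simplex. There, the weights with `x_i = 1 / S_k` for
`i < k` earn `(k - 1) / S_k`. Conversely, if `v` is the largest of these ratios, the weights
`a_i = 1 - v / p_i` are a dual certificate:
`∑ x_i - v ∑ λ_i = ∑ x_i a_i ≤ (max_i x_i) · ∑_{a_i ≥ 0} a_i`, and as `p` is decreasing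
the nonnegative `a_i` are those with `i < k` for some `k`, whose sum `k - v S_k` is at most `1`.
-/

open Finset

noncomputable section

section Prefix

variable {n : ℕ} (p : Fin n → ℝ)

def prefixInvSum (k : ℕ) : ℝ :=
  ∑ j ∈ univ.filter (fun j : Fin n => (j : ℕ) < k), 1 / p j

def equalizingWeights (k : ℕ) (i : Fin n) : ℝ :=
  if (i : ℕ) < k then 1 / p i / prefixInvSum p k else 0

variable {p}

lemma prefixInvSum_pos (hp : ∀ i, 0 < p i) {k : ℕ} (hk : 1 ≤ k) (hkn : k ≤ n) :
    0 < prefixInvSum p k :=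
  sum_pos (fun j _ => one_div_pos.mpr (hp j)) ⟨⟨0, by omega⟩, by simp; omega⟩

lemma equalizingWeights_nonneg (hp : ∀ i, 0 < p i) (k : ℕ) (i : Fin n) :
    0 ≤ equalizingWeights p k i := by
  unfold equalizingWeights
  split_ifs
  · exact div_nonneg (one_div_pos.mpr (hp i)).le
      (sum_nonneg fun j _ => (one_div_pos.mpr (hp j)).le)
  · rfl

lemma sum_equalizingWeights (hp : ∀ i, 0 < p i) {k : ℕ} (hk : 1 ≤ k) (hkn : k ≤ n) :
    ∑ i, equalizingWeights p k i = 1 := by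
  simp_rw [equalizingWeights, ← sum_filter, ← sum_div]
  exact div_self (prefixInvSum_pos hp hk hkn).ne'

lemma equalizingWeights_mul (hp : ∀ i, 0 < p i) (k : ℕ) (i : Fin n) :
    equalizingWeights p k i * p i = if (i : ℕ) < k then 1 / prefixInvSum p k else 0 := by
  unfold equalizingWeights
  split_ifs
  · field_simp [(hp i).ne']
  · exact zero_mul _

lemma sum_equalizingWeights_mul_sub_iSup (hp : ∀ i, 0 < p i) {k : ℕ} (hk : 1 ≤ k)
    (hkn : k ≤ n) :
    ∑ i, equalizingWeights p k i * p i - ⨆ i, equalizingWeights p k i * p i =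
      ((k : ℝ) - 1) / prefixInvSum p k := by
  have hS := prefixInvSum_pos hp hk hkn
  have : Nonempty (Fin n) := ⟨⟨0, by omega⟩⟩
  have hsum : ∑ i, equalizingWeights p k i * p i = k / prefixInvSum p k := by
    simp_rw [equalizingWeights_mul hp, ← sum_filter, sum_const, Fin.card_filter_val_lt,
      min_eq_right hkn, nsmul_eq_mul, div_eq_mul_one_div (k : ℝ)]
  have hsup : ⨆ i, equalizingWeights p k i * p i = 1 / prefixInvSum p k := by
    refine le_antisymm (ciSup_le fun i => ?_) ?_
    · rw [equalizingWeights_mul hp]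
      split_ifs
      · exact le_rfl
      · positivity
    · have h0 := le_ciSup (Finite.bddAbove_range fun i => equalizingWeights p k i * p i)
        (⟨0, by omega⟩ : Fin n)
      rwa [equalizingWeights_mul hp, if_pos (by simp; omega)] at h0
  rw [hsum, hsup, sub_div]

end Prefix

section Duality

variable {n : ℕ} {p : Fin n → ℝ} {v : ℝ}

lemma sum_filter_nonneg_one_sub_div_le_one (hp : ∀ i, 0 < p i) (hanti : Antitone p)
    (hv0 : 0 ≤ v) (hv : ∀ k ∈ Icc 1 n, ((k : ℝ) - 1) / prefixInvSum p k ≤ v) :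
    ∑ i with 0 ≤ 1 - v / p i, (1 - v / p i) ≤ 1 := by
  set P : Fin n → Prop := fun i => 0 ≤ 1 - v / p i
  have hlower : ∀ i j, j ≤ i → P i → P j := fun i j hji hi => by
    have := div_le_div_of_nonneg_left hv0 (hp i) (hanti hji)
    simp only [P] at hi ⊢
    linarith
  set k := #{i | P i}
  have hprefix : univ.filter P = univ.filter (fun i : Fin n => (i : ℕ) < k) := by
    ext j
    simp only [mem_filter, mem_univ, true_and]
    exact (Fin.lt_card_filter_univ_iff_apply_of_imp P hlower).symm
  have hkn : k ≤ n := (card_le_univ _).trans (by simp)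
  rw [hprefix, sum_sub_distrib, sum_const, Fin.card_filter_val_lt, min_eq_right hkn, nsmul_one]
  rcases Nat.eq_zero_or_pos k with hk0 | hk1
  · simp [hk0]
  · have hk := (div_le_iff₀ (prefixInvSum_pos hp hk1 hkn)).mp (hv k (mem_Icc.mpr ⟨hk1, hkn⟩))
    have hsum : ∑ i ∈ univ.filter (fun i : Fin n => (i : ℕ) < k), v / p i =
        v * prefixInvSum p k := by
      simp_rw [prefixInvSum, mul_sum, mul_one_div]
    linarith

lemma sum_mul_sub_iSup_le (hp : ∀ i, 0 < p i) (hanti : Antitone p) (hv0 : 0 ≤ v)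
    (hv : ∀ k ∈ Icc 1 n, ((k : ℝ) - 1) / prefixInvSum p k ≤ v) {w : Fin n → ℝ}
    (hw : ∀ i, 0 ≤ w i) :
    ∑ i, w i * p i - ⨆ i, w i * p i ≤ v * ∑ i, w i := by
  set M := ⨆ i, w i * p i
  have hM : ∀ i, w i * p i ≤ M := le_ciSup (Finite.bddAbove_range _)
  have hM0 : 0 ≤ M := Real.iSup_nonneg fun i => mul_nonneg (hw i) (hp i).le
  have hdual : ∑ i, w i * p i - v * ∑ i, w i = ∑ i, w i * p i * (1 - v / p i) := by
    rw [mul_sum, ← sum_sub_distrib]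
    refine sum_congr rfl fun i _ => ?_
    field_simp [(hp i).ne']
  have hterm : ∀ i, w i * p i * (1 - v / p i) ≤
      if 0 ≤ 1 - v / p i then M * (1 - v / p i) else 0 := by
    intro i
    split_ifs with h
    · exact mul_le_mul_of_nonneg_right (hM i) h
    · exact mul_nonpos_of_nonneg_of_nonpos (mul_nonneg (hw i) (hp i).le) (not_le.mp h).le
  have hbound : ∑ i, w i * p i * (1 - v / p i) ≤ M :=
    calc ∑ i, w i * p i * (1 - v / p i)
        ≤ ∑ i, if 0 ≤ 1 - v / p i then M * (1 - v / p i) else 0 :=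
          sum_le_sum fun i _ => hterm i
      _ = M * ∑ i with 0 ≤ 1 - v / p i, (1 - v / p i) := by rw [← sum_filter, mul_sum]
      _ ≤ M * 1 := mul_le_mul_of_nonneg_left
          (sum_filter_nonneg_one_sub_div_le_one hp hanti hv0 hv) hM0
      _ = M := mul_one M
  linarith

end Duality

lemma sum_mul_comp_eq_sum_fiber {ι κ : Type*} [Fintype κ] [DecidableEq κ] (s : Finset ι)
    (f : ι → κ) (u : ι → ℝ) (p : κ → ℝ) :
    ∑ t ∈ s, u t * p (f t) = ∑ i, (∑ t ∈ s with f t = i, u t) * p i := by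
  rw [← sum_fiberwise s f]
  refine sum_congr rfl fun i _ => ?_
  rw [sum_mul]
  exact sum_congr rfl fun t ht => by rw [(mem_filter.mp ht).2]

lemma iInf_const_sub {ι : Type*} [Finite ι] [Nonempty ι] (c : ℝ) (x : ι → ℝ) :
    ⨅ a, (c - x a) = c - ⨆ a, x a := by
  obtain ⟨b, hb⟩ := Finite.exists_max x
  have hsup : ⨆ a, x a = x b := le_antisymm (ciSup_le hb) (le_ciSup (Finite.bddAbove_range x) b)
  rw [hsup]
  exact le_antisymm (ciInf_le (Finite.bddBelow_range _) b)
    (le_ciInf fun a => sub_le_sub_left (hb a) c)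

section Assignments

variable {m n : ℕ}

def expectedLoad (q : (Fin m → Fin n) → ℝ) (u : Fin m → ℝ) (i : Fin n) : ℝ :=
  ∑ f, q f * ∑ t with f t = i, u t

def unitMixture (l : Fin n → ℝ) (f : Fin m → Fin n) : ℝ :=
  ∑ i, if f = (fun _ => i) then l i else 0

variable {q : (Fin m → Fin n) → ℝ} {u : Fin m → ℝ}

lemma expectedLoad_nonneg (hq : ∀ f, 0 ≤ q f) (hu : ∀ t, 0 ≤ u t) (i : Fin n) :
    0 ≤ expectedLoad q u i :=
  sum_nonneg fun f _ => mul_nonneg (hq f) (sum_nonneg fun t _ => hu t)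

lemma sum_expectedLoad (hq : ∑ f, q f = 1) : ∑ i, expectedLoad q u i = ∑ t, u t := by
  simp only [expectedLoad]
  rw [sum_comm]
  simp_rw [← mul_sum, sum_fiberwise, ← sum_mul, hq, one_mul]

lemma sum_mul_sum_filter_ne_eq (p : Fin n → ℝ) (a : Fin n) :
    ∑ f, q f * ∑ t with f t ≠ a, u t * p (f t) =
      ∑ i, expectedLoad q u i * p i - expectedLoad q u a * p a := by
  have hsplit : ∀ f : Fin m → Fin n, ∑ t with f t ≠ a, u t * p (f t) =
      ∑ i, (∑ t with f t = i, u t) * p i - (∑ t with f t = a, u t) * p a := by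
    intro f
    have hfiber : ∑ t with f t = a, u t * p (f t) = (∑ t with f t = a, u t) * p a := by
      rw [sum_mul]
      exact sum_congr rfl fun t ht => by rw [(mem_filter.mp ht).2]
    rw [← sum_mul_comp_eq_sum_fiber, ← hfiber,
      ← sum_filter_not_add_sum_filter univ (f · = a), add_sub_cancel_right]
  simp only [hsplit, expectedLoad, mul_sub, sum_sub_distrib, mul_sum, sum_mul, mul_assoc]
  rw [sum_comm]

lemma iInf_sum_mul_sum_filter_ne_eq [NeZero n] (p : Fin n → ℝ) :
    ⨅ a, ∑ f, q f * ∑ t with f t ≠ a, u t * p (f t) =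
      ∑ i, expectedLoad q u i * p i - ⨆ i, expectedLoad q u i * p i := by
  simp_rw [sum_mul_sum_filter_ne_eq]
  exact iInf_const_sub _ _

lemma unitMixture_nonneg {l : Fin n → ℝ} (hl : ∀ i, 0 ≤ l i) (f : Fin m → Fin n) :
    0 ≤ unitMixture l f :=
  sum_nonneg fun i _ => by split_ifs; exacts [hl i, le_rfl]

lemma sum_unitMixture (l : Fin n → ℝ) :
    ∑ f : Fin m → Fin n, unitMixture l f = ∑ i, l i := by
  simp only [unitMixture]
  rw [sum_comm]
  simp

lemma expectedLoad_unitMixture (l : Fin n → ℝ) (u : Fin m → ℝ) (i : Fin n) :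
    expectedLoad (unitMixture l) u i = l i * ∑ t, u t := by
  simp only [expectedLoad, unitMixture, sum_mul, ite_mul, zero_mul]
  rw [sum_comm]
  simp only [sum_ite_eq', mem_univ, if_true]
  rw [sum_eq_single i (fun j _ hj => by simp [hj]) (by simp)]
  simp

end Assignments

end

/-- With heterogeneous tasks and a single worker per task, the defender's
optimal expected utility over randomized strategies under a best-responding attacker
equals `U_tot · max_{1 ≤ k ≤ n} (k−1)/∑_{j<k} 1/p j`; equivalently, the maximum over
the simplex of `U_tot · ((∑ i, λ i p i) − max_i λ i p i)` equals this value. -/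
theorem stmt_10 (n m : ℕ) (hn : 2 ≤ n)
    (p : Fin n → ℝ) (hp : ∀ i, 1 / 2 ≤ p i ∧ p i ≤ 1)
    (hsort : ∀ i j : Fin n, i ≤ j → p j ≤ p i)
    (u : Fin m → ℝ) (hu : ∀ t, 0 ≤ u t)
    (Utot : ℝ) (hUtot : Utot = ∑ t, u t) :
    ∃ v : ℝ,
      IsGreatest {y : ℝ | ∃ k : ℕ, 1 ≤ k ∧ k ≤ n ∧
        y = ((k : ℝ) - 1) /
          ∑ j ∈ Finset.univ.filter (fun j : Fin n => (j : ℕ) < k), 1 / p j} v ∧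
      IsGreatest {x : ℝ | ∃ l : Fin n → ℝ, (∀ i, 0 ≤ l i) ∧ (∑ i, l i = 1) ∧
        x = Utot * ((∑ i, l i * p i) - ⨆ i, l i * p i)} (Utot * v) ∧
      IsGreatest {x : ℝ | ∃ q : (Fin m → Fin n) → ℝ,
        (∀ f, 0 ≤ q f) ∧ (∑ f, q f = 1) ∧
        x = ⨅ a : Fin n,
          ∑ f, q f * ∑ t ∈ Finset.univ.filter (fun t => f t ≠ a), u t * p (f t)}
        (Utot * v) := by
  subst hUtot
  have hpos : ∀ i, 0 < p i := fun i => by linarith [(hp i).1]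
  have : NeZero n := ⟨by omega⟩
  obtain ⟨k, hk, hmax⟩ := (Icc 1 n).exists_max_image
    (fun k : ℕ => ((k : ℝ) - 1) / prefixInvSum p k) ⟨1, by simp; omega⟩
  obtain ⟨hk1, hkn⟩ := mem_Icc.mp hk
  set v := ((k : ℝ) - 1) / prefixInvSum p k
  have hv0 : 0 ≤ v := by simpa using hmax 1 (by simp; omega)
  have hbound {w : Fin n → ℝ} (hw : ∀ i, 0 ≤ w i) :=
    sum_mul_sub_iSup_le hpos hsort hv0 hmax hw
  set l := equalizingWeights p k
  have hl0 : ∀ i, 0 ≤ l i := equalizingWeights_nonneg hpos k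
  have hl1 : ∑ i, l i = 1 := sum_equalizingWeights hpos hk1 hkn
  have hlv : ∑ i, l i * p i - ⨆ i, l i * p i = v :=
    sum_equalizingWeights_mul_sub_iSup hpos hk1 hkn
  refine ⟨v, ⟨⟨k, hk1, hkn, rfl⟩, ?_⟩, ⟨⟨l, hl0, hl1, by rw [hlv]⟩, ?_⟩,
    ⟨⟨unitMixture l, unitMixture_nonneg hl0, by rw [sum_unitMixture, hl1], ?_⟩, ?_⟩⟩
  · rintro y ⟨k', hk'1, hk'n, rfl⟩
    exact hmax k' (mem_Icc.mpr ⟨hk'1, hk'n⟩)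
  · rintro x ⟨l', hl'0, hl'1, rfl⟩
    have := hbound hl'0
    rw [hl'1, mul_one] at this
    exact mul_le_mul_of_nonneg_left this (sum_nonneg fun t _ => hu t)
  · rw [iInf_sum_mul_sum_filter_ne_eq, ← hlv]
    simp_rw [expectedLoad_unitMixture, mul_right_comm _ (∑ t, u t), ← sum_mul,
      ← Real.iSup_mul_of_nonneg (sum_nonneg fun t _ => hu t)]
    ring
  · rintro x ⟨q, hq0, hq1, rfl⟩
    rw [iInf_sum_mul_sum_filter_ne_eq, mul_comm, ← sum_expectedLoad (u := u) hq1]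
    exact hbound (expectedLoad_nonneg hq0 hu)
end

section
/- Let m, n ≥ 1, let ς : Fin m → ℝ be item sizes with ς i > 0, and let γ > 0 be the bin capacity. Construct m + 1 task utilities u : Fin (m+1) → ℝ consisting of ς 0, …, ς (m−1) together with one task of utility γ, and n + 1 workers of equal proficiency p > 0. Then the following are equivalent: (1) there exists a packing f : Fin m → Fin n with ∑_{i : f i = j} ς i ≤ γ for every bin j; (2) there exists an assignment g : Fin (m+1) → Fin (n+1) of tasks to workers such that p · ((∑ t, u t) − max_j ∑_{t : g t = j} u t) ≥ p · ∑ i, ς i, i.e., the HTDA instance has defender value (under a best-responding attacker) at least p · ∑ i, ς i. -/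
/-!
The total utility is `∑ ς + γ`, so the defender secures `p · ∑ ς` exactly when every worker carries
load at most `γ`. Item sizes being positive, the worker holding the task of utility `γ` then holds
no item; after relabelling it is the extra worker, and the other `n` workers pack the items with
capacity `γ`. Conversely a packing extends by reserving the extra worker for the big task.
-/

open Finset

def load {ι κ M : Type*} [Fintype ι] [DecidableEq κ] [AddCommMonoid M]
    (g : ι → κ) (u : ι → M) (j : κ) : M :=
  ∑ t ∈ univ.filter (fun t => g t = j), u t

section Load

variable {ι κ κ' M : Type*} [Fintype ι] [DecidableEq κ] [DecidableEq κ'] [AddCommMonoid M]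

theorem load_comp_of_injective {e : κ → κ'} (he : Function.Injective e) (g : ι → κ)
    (u : ι → M) (j : κ) : load (e ∘ g) u (e j) = load g u j := by
  simp only [load, Function.comp_apply, he.eq_iff]

theorem load_eq_zero_of_notMem_range {g : ι → κ} {j : κ} (hj : j ∉ Set.range g) (u : ι → M) :
    load g u j = 0 :=
  sum_eq_zero fun t ht => absurd ⟨t, (mem_filter.1 ht).2⟩ hj

theorem single_le_load {N : Type*} [AddCommMonoid N] [PartialOrder N] [IsOrderedAddMonoid N]
    {g : ι → κ} {u : ι → N} (hu : ∀ t, 0 ≤ u t) (t : ι) : u t ≤ load g u (g t) :=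
  single_le_sum (fun s _ => hu s) (mem_filter.2 ⟨mem_univ t, rfl⟩)

theorem load_snoc {m : ℕ} (g : Fin (m + 1) → κ) (sig : Fin m → M) (γ : M) (j : κ) :
    load g (Fin.snoc sig γ) j =
      load (g ∘ Fin.castSucc) sig j + if g (Fin.last m) = j then γ else 0 := by
  simp [load, sum_filter, Fin.sum_univ_castSucc]

end Load

section Reduction

variable {m n : ℕ} {sig : Fin m → ℝ} {γ : ℝ}

def packingAssignment (f : Fin m → Fin n) : Fin (m + 1) → Fin (n + 1) :=
  Fin.snoc (Fin.castSucc ∘ f) (Fin.last n)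

theorem load_packingAssignment_le {f : Fin m → Fin n} (hf : ∀ j, load f sig j ≤ γ)
    (j : Fin (n + 1)) : load (packingAssignment f) (Fin.snoc sig γ) j ≤ γ := by
  have hitems : packingAssignment f ∘ Fin.castSucc = Fin.castSucc ∘ f := by
    funext i; simp [packingAssignment]
  rw [load_snoc, hitems]
  induction j using Fin.lastCases with
  | last =>
    have hfree : Fin.last n ∉ Set.range (Fin.castSucc ∘ f) := by
      rintro ⟨i, hi⟩
      exact (Fin.castSucc_lt_last (f i)).ne hi
    simp [load_eq_zero_of_notMem_range hfree, packingAssignment]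
  | cast k =>
    have hbig : packingAssignment f (Fin.last m) ≠ k.castSucc := by
      simpa [packingAssignment] using (Fin.castSucc_lt_last k).ne'
    simpa [load_comp_of_injective (Fin.castSucc_injective n), hbig] using hf k

theorem apply_castSucc_ne_apply_last_of_load_le (hsig : ∀ i, 0 < sig i) {g : Fin (m + 1) → Fin (n + 1)}
    (hg : ∀ j, load g (Fin.snoc sig γ) j ≤ γ) (i : Fin m) :
    g i.castSucc ≠ g (Fin.last m) := by
  intro hi
  have hitem : sig i ≤ load (g ∘ Fin.castSucc) sig (g (Fin.last m)) :=
    hi ▸ single_le_load (fun t => (hsig t).le) i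
  have hbound := hg (g (Fin.last m))
  rw [load_snoc, if_pos rfl] at hbound
  linarith [hsig i]

theorem exists_packing_of_load_le (hsig : ∀ i, 0 < sig i) {g : Fin (m + 1) → Fin (n + 1)}
    (hg : ∀ j, load g (Fin.snoc sig γ) j ≤ γ) : ∃ f : Fin m → Fin n, ∀ j, load f sig j ≤ γ := by
  -- Relabel the workers so that the big task sits on the last one.
  set σ := Equiv.swap (g (Fin.last m)) (Fin.last n)
  have hσg : ∀ j, load (σ ∘ g) (Fin.snoc sig γ) j ≤ γ := by
    intro j
    obtain ⟨j, rfl⟩ := σ.surjective j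
    rw [load_comp_of_injective σ.injective]
    exact hg j
  have hσlast : (σ ∘ g) (Fin.last m) = Fin.last n := Equiv.swap_apply_left _ _
  have hfree (i : Fin m) : (σ ∘ g) i.castSucc ≠ Fin.last n :=
    hσlast ▸ apply_castSucc_ne_apply_last_of_load_le hsig hσg i
  let f (i : Fin m) : Fin n := ((σ ∘ g) i.castSucc).castPred (hfree i)
  have hitems : Fin.castSucc ∘ f = (σ ∘ g) ∘ Fin.castSucc := by
    funext i; simp [f]
  refine ⟨f, fun k => ?_⟩
  have hk := hσg k.castSucc
  rwa [load_snoc, hσlast, if_neg (Fin.castSucc_lt_last k).ne', add_zero, ← hitems,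
    load_comp_of_injective (Fin.castSucc_injective n)] at hk

theorem exists_packing_iff_exists_load_le (hsig : ∀ i, 0 < sig i) :
    (∃ f : Fin m → Fin n, ∀ j, load f sig j ≤ γ) ↔
      ∃ g : Fin (m + 1) → Fin (n + 1), ∀ j, load g (Fin.snoc sig γ) j ≤ γ :=
  ⟨fun ⟨f, hf⟩ => ⟨packingAssignment f, load_packingAssignment_le hf⟩,
    fun ⟨_, hg⟩ => exists_packing_of_load_le hsig hg⟩

end Reduction

theorem mul_sub_iSup_ge_mul_iff {κ : Type*} [Finite κ] [Nonempty κ] {p : ℝ} (hp : 0 < p)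
    (S c : ℝ) (L : κ → ℝ) : p * (S + c - ⨆ j, L j) ≥ p * S ↔ ∀ j, L j ≤ c := by
  rw [ge_iff_le, mul_le_mul_iff_right₀ hp, ← ciSup_le_iff (Set.finite_range L).bddAbove]
  constructor <;> intro h <;> linarith

theorem stmt_12_general (m n : ℕ)
    (sig : Fin m → ℝ) (hsig : ∀ i, 0 < sig i)
    (γ : ℝ) (p : ℝ) (hp : 0 < p)
    (u : Fin (m + 1) → ℝ) (hu : u = Fin.snoc sig γ) :
    (∃ f : Fin m → Fin n, ∀ j : Fin n,
        ∑ i ∈ Finset.univ.filter (fun i => f i = j), sig i ≤ γ) ↔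
    (∃ g : Fin (m + 1) → Fin (n + 1),
        p * ((∑ t, u t)
            - ⨆ j : Fin (n + 1), ∑ t ∈ Finset.univ.filter (fun t => g t = j), u t)
          ≥ p * ∑ i, sig i) := by
  subst hu
  simp only [Fin.sum_snoc]
  exact (exists_packing_iff_exists_load_le hsig).trans
    (exists_congr fun g => (mul_sub_iSup_ge_mul_iff hp _ γ (load g _)).symm)

/-- Correctness of the bin-packing reduction proving strong NP-hardness
of HTDA. Items of sizes `sig` fit into `n` bins of capacity `γ` iff the HTDA instance —
with `m+1` tasks of utilities `sig 0, …, sig (m−1), γ`, and `n+1` workers of equal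
proficiency `p` — admits an assignment of defender value (under a best-responding
attacker) at least `p · ∑ i, sig i`. -/
theorem stmt_12 (m n : ℕ) (hm : 1 ≤ m) (hn : 1 ≤ n)
    (sig : Fin m → ℝ) (hsig : ∀ i, 0 < sig i)
    (γ : ℝ) (hγ : 0 < γ) (p : ℝ) (hp : 0 < p)
    (u : Fin (m + 1) → ℝ) (hu : u = Fin.snoc sig γ) :
    (∃ f : Fin m → Fin n, ∀ j : Fin n,
        ∑ i ∈ Finset.univ.filter (fun i => f i = j), sig i ≤ γ) ↔
    (∃ g : Fin (m + 1) → Fin (n + 1),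
        p * ((∑ t, u t)
            - ⨆ j : Fin (n + 1), ∑ t ∈ Finset.univ.filter (fun t => g t = j), u t)
          ≥ p * ∑ i, sig i) :=
  stmt_12_general m n sig hsig γ p hp u hu
end

section
/- Let p : Fin n → ℝ be nonnegative values sorted in decreasing order (i ≤ j → p i ≥ p j), let c : Fin n → ℕ be per-index caps, and let B ∈ ℕ be a budget. Define the greedy allocation s^g recursively in index order by s^g j = min(c j, B − ∑_{j' < j} s^g j'). Then s^g maximizes ∑ j, s j * p j over all s : Fin n → ℕ satisfying s j ≤ c j for all j and ∑ j, s j ≤ B. -/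
/-!
By induction over the lower sets of the index order, every prefix sum of the greedy allocation
is `min (cap of the prefix) B`, which bounds the same prefix sum of any feasible allocation.
Prefix dominance against a nonnegative antitone weight gives dominance of the weighted sums
(Abel summation): peeling off the largest index `a`, the rest of the sum is bounded below
using the weight `p a`, which is at most every earlier weight.
-/

open Finset

namespace Finset

variable {ι R : Type*} [LinearOrder ι] [Ring R] [PartialOrder R] [IsOrderedRing R]

theorem sum_mul_le_sum_mul_of_partialSums_nonneg {s : Finset ι} {d p : ι → R}
    (hp : AntitoneOn p s) (hd : ∀ i ∈ s, 0 ≤ ∑ j ∈ s with j ≤ i, d j)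
    {q : R} (hq : ∀ i ∈ s, q ≤ p i) :
    (∑ i ∈ s, d i) * q ≤ ∑ i ∈ s, d i * p i := by
  induction s using Finset.induction_on_max generalizing q with
  | empty => simp
  | insert a s hlt ih =>
    have ha : a ∉ s := fun h => lt_irrefl a (hlt a h)
    have hprefix : ∀ i ∈ s, {j ∈ insert a s | j ≤ i} = {j ∈ s | j ≤ i} := fun i hi => by
      rw [filter_insert, if_neg (not_le.2 (hlt i hi))]
    have hs : (∑ i ∈ s, d i) * p a ≤ ∑ i ∈ s, d i * p i :=
      ih (hp.mono (by simp)) (fun i hi => hprefix i hi ▸ hd i (mem_insert_of_mem hi))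
        (fun i hi => hp (by simp [hi]) (by simp) (hlt i hi).le)
    have htotal : 0 ≤ d a + ∑ i ∈ s, d i := by
      simpa [filter_true_of_mem (fun i hi => (mem_insert.1 hi).elim le_of_eq fun h => (hlt i h).le),
        sum_insert ha] using hd a (mem_insert_self a s)
    rw [sum_insert ha, sum_insert ha]
    calc (d a + ∑ i ∈ s, d i) * q
        ≤ (d a + ∑ i ∈ s, d i) * p a :=
          mul_le_mul_of_nonneg_left (hq a (mem_insert_self a s)) htotal
      _ ≤ d a * p a + ∑ i ∈ s, d i * p i := by rw [add_mul]; exact add_le_add le_rfl hs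

theorem sum_mul_le_sum_mul_of_partialSums_le {s : Finset ι} {a b p : ι → R}
    (hp : AntitoneOn p s) (hp₀ : ∀ i ∈ s, 0 ≤ p i)
    (hab : ∀ i ∈ s, ∑ j ∈ s with j ≤ i, a j ≤ ∑ j ∈ s with j ≤ i, b j) :
    ∑ i ∈ s, a i * p i ≤ ∑ i ∈ s, b i * p i := by
  have := sum_mul_le_sum_mul_of_partialSums_nonneg (d := b - a) hp
    (fun i hi => by simpa [sum_sub_distrib] using hab i hi) hp₀
  simpa [sub_mul, sum_sub_distrib] using this

end Finset

section Greedy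

variable {α : Type*} [Fintype α] [LinearOrder α] {c sg : α → ℕ} {B : ℕ}

theorem sum_greedy_eq_min_of_isLowerSet
    (hsg : ∀ j, sg j = min (c j) (B - ∑ j' ∈ univ.filter (· < j), sg j'))
    {t : Finset α} (ht : IsLowerSet (t : Set α)) :
    ∑ j ∈ t, sg j = min (∑ j ∈ t, c j) B := by
  induction t using Finset.induction_on_max with
  | empty => simp
  | insert a t hlt ih =>
    have ha : a ∉ t := fun h => lt_irrefl a (hlt a h)
    have ht' : IsLowerSet (t : Set α) := fun x y hyx hx => by
      have hy : y ∈ insert a t := ht hyx (mem_insert_of_mem hx)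
      exact (mem_insert.1 hy).resolve_left (ne_of_lt (hyx.trans_lt (hlt x hx)))
    have hbelow : univ.filter (· < a) = t := by
      ext y
      refine ⟨fun hy => ?_, fun hy => by simpa using hlt y hy⟩
      have hy : y < a := by simpa using hy
      exact (mem_insert.1 (ht hy.le (mem_insert_self a t))).resolve_left hy.ne
    rw [sum_insert ha, sum_insert ha, hsg a, hbelow, ih ht']
    omega

theorem sum_le_sum_greedy_of_isLowerSet
    (hsg : ∀ j, sg j = min (c j) (B - ∑ j' ∈ univ.filter (· < j), sg j'))
    {s : α → ℕ} (hsc : ∀ j, s j ≤ c j) (hsB : ∑ j, s j ≤ B)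
    {t : Finset α} (ht : IsLowerSet (t : Set α)) :
    ∑ j ∈ t, s j ≤ ∑ j ∈ t, sg j := by
  rw [sum_greedy_eq_min_of_isLowerSet hsg ht]
  exact le_min (sum_le_sum fun j _ => hsc j) ((sum_le_sum_of_subset (subset_univ t)).trans hsB)

end Greedy

/-- Correctness of the greedy inner loop of Algorithm 2. The greedy
allocation `sg j = min (c j) (B − ∑_{j' < j} sg j')`, processing workers in decreasing
order of proficiency, maximizes `∑ j, s j * p j` over all capped, budgeted allocations. -/
theorem stmt_13 (n : ℕ)
    (p : Fin n → ℝ) (hp : ∀ i, 0 ≤ p i)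
    (hsort : ∀ i j : Fin n, i ≤ j → p j ≤ p i)
    (c : Fin n → ℕ) (B : ℕ)
    (sg : Fin n → ℕ)
    (hsg : ∀ j : Fin n,
      sg j = min (c j) (B - ∑ j' ∈ Finset.univ.filter (fun j' : Fin n => j' < j), sg j')) :
    (∀ j, sg j ≤ c j) ∧ (∑ j, sg j ≤ B) ∧
      ∀ s : Fin n → ℕ, (∀ j, s j ≤ c j) → (∑ j, s j ≤ B) →
        ∑ j, (s j : ℝ) * p j ≤ ∑ j, (sg j : ℝ) * p j := by
  refine ⟨fun j => hsg j ▸ min_le_left _ _, ?_, fun s hsc hsB => ?_⟩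
  · have := sum_greedy_eq_min_of_isLowerSet hsg (t := univ) (by simpa using isLowerSet_univ)
    omega
  · refine sum_mul_le_sum_mul_of_partialSums_le (fun i _ j _ hij => hsort i j hij)
      (fun i _ => hp i) fun i _ => ?_
    have hlower : IsLowerSet ((univ.filter (· ≤ i) : Finset (Fin n)) : Set (Fin n)) :=
      fun x y hyx hx => by simpa using hyx.trans (by simpa using hx)
    exact_mod_cast sum_le_sum_greedy_of_isLowerSet hsg hsc hsB hlower
end
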